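/- Uniqueness of the resonant site: let α ∈ DC(κ,τ), 0 < σ < 1/6, ρ ∈ ℝ, N = (2/(r−r'))·|ln ε|, and suppose ε satisfies |ln ε|^τ · ε^σ ≤ κ(r−r')^τ/2^{τ+1} and ε^{σ/τ} is small enough that 2^{−1/τ}κ^{1/τ}ε^{−σ/τ} − N > 2N². If n* ∈ ℤ^d with 0 < |n*| ≤ N satisfies inf_{j∈ℤ}|2ρ − ⟨n*,α⟩ − 2πj| < ε^σ, then any other n' ∈ ℤ^d with n' ≠ n* satisfying inf_{j∈ℤ}|2ρ − ⟨n',α⟩ − 2πj| < ε^σ must have |n'| > 2N². -/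

import Mathlib

open Real

/-!
Two resonant sites `n*` and `n'` put `⟨n' - n*, α⟩` within `2ε^σ` of `2πℤ`. The Diophantine
condition then forces `κ / |n' - n*|^τ < 2ε^σ`, i.e. `|n' - n*| > 2^{-1/τ} κ^{1/τ} ε^{-σ/τ}`,
and the triangle inequality with `|n*| ≤ N` gives `|n'| > 2^{-1/τ} κ^{1/τ} ε^{-σ/τ} - N > 2N²`.
-/

theorem abs_sub_sub_mul_intCast_sub_lt {c z x y δ : ℝ} {j j' : ℤ}
    (hx : |z - x - c * j| < δ) (hy : |z - y - c * j'| < δ) :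
    |y - x - c * (j - j' : ℤ)| < 2 * δ := by
  have hdiff : y - x - c * (j - j' : ℤ) = (z - x - c * j) - (z - y - c * j') := by
    push_cast; ring
  calc |y - x - c * (j - j' : ℤ)| ≤ |z - x - c * j| + |z - y - c * j'| :=
        hdiff ▸ abs_sub _ _
    _ < δ + δ := add_lt_add hx hy
    _ = 2 * δ := (two_mul δ).symm

section IntVector

variable {ι : Type*} [Fintype ι]

theorem sum_intCast_sub_mul (a b : ι → ℤ) (α : ι → ℝ) :
    ∑ i, ((a - b) i : ℝ) * α i = ∑ i, (a i : ℝ) * α i - ∑ i, (b i : ℝ) * α i := by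
  simp only [Pi.sub_apply, Int.cast_sub, sub_mul, Finset.sum_sub_distrib]

theorem sum_abs_intCast_sub_le (a b : ι → ℤ) :
    ∑ i, |((a - b) i : ℝ)| ≤ ∑ i, |(a i : ℝ)| + ∑ i, |(b i : ℝ)| := by
  rw [← Finset.sum_add_distrib]
  gcongr with i
  simpa only [Pi.sub_apply, Int.cast_sub] using abs_sub (a i : ℝ) (b i)

theorem sum_abs_intCast_pos {n : ι → ℤ} (hn : n ≠ 0) : 0 < ∑ i, |(n i : ℝ)| := by
  obtain ⟨i, hi⟩ := Function.ne_iff.mp hn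
  exact Finset.sum_pos' (fun _ _ => abs_nonneg _)
    ⟨i, Finset.mem_univ i, abs_pos.mpr (Int.cast_ne_zero.mpr hi)⟩

end IntVector

theorem rpow_one_div_div_lt_of_div_rpow_lt {κ δ S τ : ℝ} (hκ : 0 ≤ κ) (hδ : 0 < δ)
    (hS : 0 < S) (hτ : 0 < τ) (h : κ / S ^ τ < δ) : (κ / δ) ^ (1 / τ) < S := by
  have hκS : κ / δ < S ^ τ := by
    rw [div_lt_iff₀ (rpow_pos_of_pos hS τ)] at h
    rwa [div_lt_iff₀ hδ, mul_comm]
  calc (κ / δ) ^ (1 / τ) < (S ^ τ) ^ (1 / τ) :=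
        rpow_lt_rpow (div_nonneg hκ hδ.le) hκS (one_div_pos.mpr hτ)
    _ = S := by rw [one_div, rpow_rpow_inv hS.le hτ.ne']

theorem div_two_mul_rpow_rpow_one_div {κ ε σ τ : ℝ} (hκ : 0 ≤ κ) (hε : 0 < ε) :
    (κ / (2 * ε ^ σ)) ^ (1 / τ) = 2 ^ (-1 / τ) * κ ^ (1 / τ) * ε ^ (-σ / τ) := by
  rw [div_rpow hκ (by positivity), mul_rpow zero_le_two (rpow_nonneg hε.le σ),
    ← rpow_mul hε.le, mul_one_div, neg_div, rpow_neg zero_le_two, neg_div, rpow_neg hε.le,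
    div_eq_mul_inv, mul_inv]
  ring

theorem stmt_4_general (d : ℕ) (κ τ σ ε ρ : ℝ) (α : Fin d → ℝ)
    (hκ : 0 < κ) (hτ : (d : ℝ) < τ)
    (hε : 0 < ε)
    (hDC : ∀ n : Fin d → ℤ, n ≠ 0 →
      ∀ j : ℤ, κ / (∑ i, |(n i : ℝ)|) ^ τ < |(∑ i, (n i : ℝ) * α i) - 2 * π * j|)
    (N : ℝ)
    (hsep : 2 * N ^ 2 < 2 ^ (-1 / τ) * κ ^ (1 / τ) * ε ^ (-σ / τ) - N)
    (nstar : Fin d → ℤ) (hnstarN : (∑ i, |(nstar i : ℝ)|) ≤ N)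
    (hres : ∃ j : ℤ, |2 * ρ - (∑ i, (nstar i : ℝ) * α i) - 2 * π * j| < ε ^ σ) :
    ∀ n' : Fin d → ℤ, n' ≠ nstar →
      (∃ j : ℤ, |2 * ρ - (∑ i, (n' i : ℝ) * α i) - 2 * π * j| < ε ^ σ) →
      2 * N ^ 2 < ∑ i, |(n' i : ℝ)| := by
  rintro n' hne ⟨j', hj'⟩
  obtain ⟨j, hj⟩ := hres
  have hm : n' - nstar ≠ 0 := sub_ne_zero.mpr hne
  have hclose : κ / (∑ i, |((n' - nstar) i : ℝ)|) ^ τ < 2 * ε ^ σ := by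
    refine (hDC _ hm (j - j')).trans ?_
    rw [sum_intCast_sub_mul]
    exact abs_sub_sub_mul_intCast_sub_lt hj hj'
  have hfar : 2 ^ (-1 / τ) * κ ^ (1 / τ) * ε ^ (-σ / τ) < ∑ i, |((n' - nstar) i : ℝ)| := by
    rw [← div_two_mul_rpow_rpow_one_div hκ.le hε]
    exact rpow_one_div_div_lt_of_div_rpow_lt hκ.le (by positivity) (sum_abs_intCast_pos hm)
      ((Nat.cast_nonneg d).trans_lt hτ) hclose
  linarith [sum_abs_intCast_sub_le n' nstar]

/-- Uniqueness of the resonant site: under the Diophantine condition and the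
smallness conditions on ε, if `n*` is an ε^σ-resonant site with `0 < |n*| ≤ N`,
then any other ε^σ-resonant site `n' ≠ n*` satisfies `|n'| > 2N²`. -/
theorem stmt_4 (d : ℕ) (κ τ σ r r' ε ρ : ℝ) (α : Fin d → ℝ)
    (hκ : 0 < κ) (hτ : (d : ℝ) < τ) (hσ : 0 < σ) (hσ' : σ < 1 / 6)
    (hr' : 0 < r') (hr : r' < r) (hε : 0 < ε) (hε1 : ε < 1)
    (hDC : ∀ n : Fin d → ℤ, n ≠ 0 →
      ∀ j : ℤ, κ / (∑ i, |(n i : ℝ)|) ^ τ < |(∑ i, (n i : ℝ) * α i) - 2 * π * j|)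
    (N : ℝ) (hN : N = 2 / (r - r') * |Real.log ε|)
    (hsmall : |Real.log ε| ^ τ * ε ^ σ ≤ κ * (r - r') ^ τ / 2 ^ (τ + 1))
    (hsep : 2 * N ^ 2 < 2 ^ (-1 / τ) * κ ^ (1 / τ) * ε ^ (-σ / τ) - N)
    (nstar : Fin d → ℤ) (hnstar0 : nstar ≠ 0) (hnstarN : (∑ i, |(nstar i : ℝ)|) ≤ N)
    (hres : ∃ j : ℤ, |2 * ρ - (∑ i, (nstar i : ℝ) * α i) - 2 * π * j| < ε ^ σ) :
    ∀ n' : Fin d → ℤ, n' ≠ nstar →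
      (∃ j : ℤ, |2 * ρ - (∑ i, (n' i : ℝ) * α i) - 2 * π * j| < ε ^ σ) →
      2 * N ^ 2 < ∑ i, |(n' i : ℝ)| :=
  stmt_4_general d κ τ σ ε ρ α hκ hτ hε hDC N hsep nstar hnstarN hres
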